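/- Fix n ≥ 2, k ≥ 1, and p ≥ 1. The number of pairs (x, y) ∈ G_p × G_p such that the reduced word of x has length at least k+1 with k-th letter a_2^{−1} and (k+1)-st letter a_1, and the reduced word of y has length at least k with first k letters equal to the first k letters of the reduced word of x, is exactly 𝒮(k+1,p)·𝒮(k,p)/(2n(2n−1)·𝒲(k)), which equals 𝒮(k,p)·𝒮(k+1,p)/(2n·𝒲(k+1)). -/

import Mathlib

/-- `Gcard n p` is the number of elements of the rank-`n` free group whose reduced word
has length at most `p` (the cardinality of `G_p`). -/
noncomputable def Gcard (n p : ℕ) : ℕ :=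
  {w : FreeGroup (Fin n) | w.toWord.length ≤ p}.ncard

/-- `Scard n k p = |G_p| − |G_{k−1}|` is the number of elements of the rank-`n` free
group whose reduced word has length between `k` and `p`. -/
noncomputable def Scard (n k p : ℕ) : ℕ := Gcard n p - Gcard n (k - 1)

/-- `Wcard n k = 2n(2n−1)^{k−1}` is the number of elements of the rank-`n` free group
whose reduced word has length exactly `k` (for `k ≥ 1`). -/
def Wcard (n k : ℕ) : ℕ := 2 * n * (2 * n - 1) ^ (k - 1)

/-!
A reduced word `u ≠ []` has exactly `2n - 1` reduced one-letter extensions, so the reduced words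
of length `|u| + j` beginning with `u` number `(2n - 1)^j`, and those of length at most `p` a
geometric sum. Fibering over the common prefix `w` of length `k`, a pair `(x, y)` of the count
amounts to a reduced word `w` ending in `a₂⁻¹` (there are `(2n - 1)^(k-1)` of them, by reversing
words), a reduced extension of `w a₁` (for `x`) and one of `w` (for `y`). The same fibering
counts the words of length between `k` and `p`, which gives `𝒮(k,p)`; both identities are then
algebra.
-/

open Set Finset Function

theorem Set.ncard_eq_ncard_mul_of_fibers {β γ : Type*} {f : β → γ} {s : Set β} {t : Set γ}
    {c : ℕ} (hs : s.Finite) (ht : t.Finite) (hf : MapsTo f s t)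
    (hfib : ∀ y ∈ t, {x ∈ s | f x = y}.ncard = c) : s.ncard = t.ncard * c := by
  classical
  rw [ncard_eq_toFinset_card _ hs, ncard_eq_toFinset_card _ ht,
    Finset.card_eq_sum_card_fiberwise (t := ht.toFinset)
      (fun x hx => by simpa using hf (by simpa using hx))]
  refine Finset.sum_const_nat fun y hy => ?_
  rw [← hfib y (by simpa using hy), ← ncard_coe_finset]
  congr 1
  ext x
  simp

theorem Set.ncard_preimage_of_injective {β γ : Type*} {f : β → γ} (hf : f.Injective)
    (s : Set γ) :
    (f ⁻¹' s).ncard = (s ∩ range f).ncard := by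
  rw [← image_preimage_eq_inter_range, ncard_image_of_injective _ hf]

def IsCaseTwoPair {β : Type*} (p k : ℕ) (a c : β) (X Y : List β) : Prop :=
  X.length ≤ p ∧ Y.length ≤ p ∧ k + 1 ≤ X.length ∧ X[k - 1]? = some a ∧ X[k]? = some c ∧
    k ≤ Y.length ∧ Y.take k = X.take k

theorem isCaseTwoPair_iff {β : Type*} {p k : ℕ} {a c : β} {X Y : List β} (hk : 1 ≤ k) :
    IsCaseTwoPair p k a c X Y ↔ X.length ≤ p ∧ Y.length ≤ p ∧
      (X.take k).length = k ∧ [a] <:+ X.take k ∧ X.take k ++ [c] <+: X ∧ X.take k <+: Y := by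
  refine and_congr_right fun _ => and_congr_right fun _ => ?_
  rw [List.singleton_suffix_iff_getLast?_eq_some, List.getLast?_eq_getElem?,
    List.prefix_iff_eq_take (l₂ := Y), List.prefix_iff_eq_take]
  simp only [List.length_take, List.length_append, List.length_singleton]
  constructor
  · rintro ⟨h1, h2, h3, h4, h5⟩
    have hk' : min k X.length = k := by omega
    simp only [hk', List.take_add_one, h3, List.getElem?_take, h2, h5,
      if_pos (show k - 1 < k by omega)]
    simp
  · rintro ⟨h1, h2, h3, h4⟩
    rw [h1] at h2 h3 h4
    rw [List.take_add_one, List.append_cancel_left_eq] at h3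
    have hX : X[k]? = some c := by
      cases h : X[k]? <;> simp_all
    have hY := congrArg List.length h4
    simp only [List.length_take] at hY
    refine ⟨?_, ?_, hX, by omega, h4.symm⟩
    · exact List.getElem?_eq_some_iff.mp hX |>.1
    · simpa [List.getElem?_take, show k - 1 < k by omega] using h2

namespace FreeGroup

variable {α : Type*}

theorem range_toWord [DecidableEq α] : range (toWord (α := α)) = {L | IsReduced L} := by
  ext L
  refine ⟨?_, fun h => ⟨mk L, by rw [toWord_mk, h.reduce_eq]⟩⟩
  rintro ⟨x, rfl⟩
  exact isReduced_toWord

theorem ncard_setOf_toWord [DecidableEq α] (Q : List (α × Bool) → Prop) :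
    {x : FreeGroup α | Q x.toWord}.ncard = {L | IsReduced L ∧ Q L}.ncard := by
  rw [← preimage_ofPred_eq, ncard_preimage_of_injective toWord_injective, range_toWord]
  congr 1
  ext L
  exact and_comm

theorem ncard_setOf_toWord_prod [DecidableEq α]
    (Q : List (α × Bool) → List (α × Bool) → Prop) :
    {z : FreeGroup α × FreeGroup α | Q z.1.toWord z.2.toWord}.ncard =
      {z : List (α × Bool) × List (α × Bool) |
        IsReduced z.1 ∧ IsReduced z.2 ∧ Q z.1 z.2}.ncard := by
  have hinj : (Prod.map (toWord (α := α)) (toWord (α := α))).Injective :=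
    Prod.map_injective.mpr ⟨toWord_injective, toWord_injective⟩
  rw [show {z : FreeGroup α × FreeGroup α | Q z.1.toWord z.2.toWord} =
      Prod.map (toWord (α := α)) (toWord (α := α)) ⁻¹' {z | Q z.1 z.2} from rfl,
    ncard_preimage_of_injective hinj, range_prodMap, range_toWord]
  congr 1
  ext z
  simp only [mem_inter_iff, mem_ofPred_eq, mem_prod]
  tauto

theorem isReduced_reverse_iff {L : List (α × Bool)} : IsReduced L.reverse ↔ IsReduced L := by
  rw [IsReduced, IsReduced, List.isChain_reverse]
  constructor <;> exact fun h => h.imp fun _ _ hab e => (hab e.symm).symm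

theorem isReduced_append_singleton_iff {L : List (α × Bool)} {a c : α × Bool}
    (hL : L.getLast? = some a) :
    IsReduced (L ++ [c]) ↔ IsReduced L ∧ (a.1 = c.1 → a.2 = c.2) := by
  simp [IsReduced, List.isChain_append, hL]

theorem card_filter_not_cancel [Fintype α] [DecidableEq α] (a : α × Bool) :
    #{c : α × Bool | a.1 = c.1 → a.2 = c.2} = 2 * Fintype.card α - 1 := by
  have : ({c : α × Bool | a.1 = c.1 → a.2 = c.2} : Finset (α × Bool)) =
      univ.erase (a.1, !a.2) := by
    ext ⟨c1, c2⟩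
    simp only [mem_filter, mem_erase, ne_eq, Prod.mk.injEq]
    obtain ⟨a1, a2⟩ := a
    cases a2 <;> cases c2 <;> grind
  rw [this, card_erase_of_mem (mem_univ _), card_univ, Fintype.card_prod, Fintype.card_bool,
    mul_comm]

-- Sphere and ball in the cone of `u` (the subtree of the Cayley tree below `u`), radii measured
-- from the identity.
def coneSphere (u : List (α × Bool)) (m : ℕ) : Set (List (α × Bool)) :=
  {L | IsReduced L ∧ L.length = m ∧ u <+: L}

def coneBall (u : List (α × Bool)) (b : ℕ) : Set (List (α × Bool)) :=
  {L | IsReduced L ∧ L.length ≤ b ∧ u <+: L}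

theorem coneSphere_finite [Finite α] (u : List (α × Bool)) (m : ℕ) : (coneSphere u m).Finite :=
  (List.finite_length_eq _ m).subset fun _ hL => hL.2.1

theorem coneBall_finite [Finite α] (u : List (α × Bool)) (b : ℕ) : (coneBall u b).Finite :=
  (List.finite_length_le _ b).subset fun _ hL => hL.2.1

theorem coneSphere_eq_empty_of_not_isReduced {u : List (α × Bool)} (hu : ¬IsReduced u) (m : ℕ) :
    coneSphere u m = ∅ :=
  eq_empty_of_forall_notMem fun _ hL => hu (hL.1.infix hL.2.2.isInfix)

theorem coneSphere_eq_iUnion {u : List (α × Bool)} {m : ℕ} (hm : u.length ≤ m) :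
    coneSphere u (m + 1) = ⋃ c, coneSphere (u ++ [c]) (m + 1) := by
  ext L
  simp only [coneSphere, mem_iUnion, mem_ofPred_eq]
  constructor
  · rintro ⟨hL, hlen, r, rfl⟩
    obtain _ | ⟨c, r⟩ := r
    · simp only [List.append_nil] at hlen
      omega
    · exact ⟨c, hL, hlen, by simp⟩
  · rintro ⟨c, hL, hlen, hc⟩
    exact ⟨hL, hlen, (List.prefix_append u [c]).trans hc⟩

theorem pairwise_disjoint_coneSphere_append (u : List (α × Bool)) (m : ℕ) :
    Pairwise (Disjoint on fun c => coneSphere (u ++ [c]) m) := by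
  intro c c' hcc'
  refine Set.disjoint_left.mpr fun L ⟨_, _, hc⟩ ⟨_, _, hc'⟩ => hcc' ?_
  have := (List.prefix_of_prefix_length_le hc hc' (by simp)).eq_of_length (by simp)
  simpa using this

theorem ncard_coneSphere_succ [Fintype α] {u : List (α × Bool)} {m : ℕ} (hm : u.length ≤ m) :
    (coneSphere u (m + 1)).ncard = ∑ c, (coneSphere (u ++ [c]) (m + 1)).ncard := by
  rw [coneSphere_eq_iUnion hm, ncard_iUnion_of_finite (fun c => coneSphere_finite _ _)
    (pairwise_disjoint_coneSphere_append u _), finsum_eq_sum_of_fintype]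

theorem ncard_coneSphere [Fintype α] [DecidableEq α] {u : List (α × Bool)} (hu : IsReduced u)
    (hne : u ≠ []) (j : ℕ) :
    (coneSphere u (u.length + j)).ncard = (2 * Fintype.card α - 1) ^ j := by
  induction j generalizing u with
  | zero =>
    have : coneSphere u u.length = {u} := by
      ext L
      simp only [coneSphere, mem_ofPred_eq, mem_singleton_iff]
      refine ⟨fun ⟨_, hlen, hpre⟩ => (hpre.eq_of_length hlen.symm).symm, ?_⟩
      rintro rfl
      exact ⟨hu, rfl, List.prefix_refl _⟩
    rw [Nat.add_zero, this, ncard_singleton, pow_zero]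
  | succ j ih =>
    obtain ⟨a, ha⟩ := Option.ne_none_iff_exists'.mp (List.getLast?_eq_none_iff.not.mpr hne)
    have hterm : ∀ c, (coneSphere (u ++ [c]) (u.length + (j + 1))).ncard =
        if a.1 = c.1 → a.2 = c.2 then (2 * Fintype.card α - 1) ^ j else 0 := by
      intro c
      split_ifs with hc
      · have hred : IsReduced (u ++ [c]) := (isReduced_append_singleton_iff ha).mpr ⟨hu, hc⟩
        simpa [Nat.add_assoc, Nat.add_comm 1 j] using ih hred (by simp)
      · rw [coneSphere_eq_empty_of_not_isReduced
          (fun h => hc ((isReduced_append_singleton_iff ha).mp h).2), ncard_empty]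
    rw [← Nat.add_assoc, ncard_coneSphere_succ (Nat.le_add_right _ _), Nat.add_assoc]
    simp only [hterm, sum_ite, sum_const_zero, add_zero, sum_const, smul_eq_mul,
      card_filter_not_cancel, pow_succ']

theorem ncard_coneSphere_nil [Fintype α] [DecidableEq α] (m : ℕ) :
    (coneSphere ([] : List (α × Bool)) (m + 1)).ncard =
      2 * Fintype.card α * (2 * Fintype.card α - 1) ^ m := by
  have hterm (c : α × Bool) : (coneSphere [c] (m + 1)).ncard = (2 * Fintype.card α - 1) ^ m := by
    simpa [Nat.add_comm 1 m] using ncard_coneSphere IsReduced.singleton (List.cons_ne_nil c []) m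
  rw [ncard_coneSphere_succ (Nat.zero_le m)]
  simp only [List.nil_append, hterm, sum_const, card_univ, Fintype.card_prod, Fintype.card_bool,
    smul_eq_mul, mul_comm 2]

theorem coneBall_succ (u : List (α × Bool)) (b : ℕ) :
    coneBall u (b + 1) = coneBall u b ∪ coneSphere u (b + 1) := by
  ext L
  simp only [coneBall, coneSphere, mem_union, mem_ofPred_eq]
  grind

theorem ncard_coneBall [Fintype α] [DecidableEq α] {u : List (α × Bool)} (hu : IsReduced u)
    (hne : u ≠ []) (b : ℕ) :
    (coneBall u b).ncard = ∑ i ∈ range (b + 1 - u.length), (2 * Fintype.card α - 1) ^ i := by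
  have hlen : 1 ≤ u.length := List.length_pos_iff.mpr hne
  induction b with
  | zero =>
    have : coneBall u 0 = ∅ :=
      eq_empty_of_forall_notMem fun L ⟨_, hL, hpre⟩ => by have := hpre.length_le; omega
    rw [this, ncard_empty, show 0 + 1 - u.length = 0 by omega, sum_range_zero]
  | succ b ih =>
    have hdisj : Disjoint (coneBall u b) (coneSphere u (b + 1)) :=
      Set.disjoint_left.mpr fun L hL hL' => by have := hL.2.1; have := hL'.2.1; omega
    rw [coneBall_succ, ncard_union_eq hdisj (coneBall_finite _ _) (coneSphere_finite _ _), ih]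
    obtain hb | hb := le_or_gt u.length (b + 1)
    · obtain ⟨j, hj⟩ := Nat.exists_eq_add_of_le hb
      rw [hj, ncard_coneSphere hu hne, show u.length + j + 1 - u.length = j + 1 by omega,
        show u.length + j - u.length = j by omega, sum_range_succ]
    · have : coneSphere u (b + 1) = ∅ :=
        eq_empty_of_forall_notMem fun L ⟨_, hL, hpre⟩ => by have := hpre.length_le; omega
      rw [this, ncard_empty, add_zero, show b + 1 + 1 - u.length = b + 1 - u.length by omega]

theorem ncard_setOf_suffix [Fintype α] [DecidableEq α] {u : List (α × Bool)} (hu : IsReduced u)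
    (hne : u ≠ []) (j : ℕ) :
    {w | IsReduced w ∧ w.length = u.length + j ∧ u <:+ w}.ncard =
      (2 * Fintype.card α - 1) ^ j := by
  have : {w | IsReduced w ∧ w.length = u.length + j ∧ u <:+ w} =
      List.reverse '' coneSphere u.reverse (u.reverse.length + j) := by
    rw [List.reverse_involutive.image_eq_preimage_symm]
    ext w
    simp [coneSphere, isReduced_reverse_iff, List.reverse_prefix]
  rw [this, ncard_image_of_injective _ List.reverse_injective,
    ncard_coneSphere (isReduced_reverse_iff.mpr hu) (by simpa using hne)]

theorem ncard_annulus [Fintype α] [DecidableEq α] {k : ℕ} (hk : 1 ≤ k) (p : ℕ) :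
    {L : List (α × Bool) | IsReduced L ∧ k ≤ L.length ∧ L.length ≤ p}.ncard =
      2 * Fintype.card α * (2 * Fintype.card α - 1) ^ (k - 1) *
        ∑ i ∈ range (p + 1 - k), (2 * Fintype.card α - 1) ^ i := by
  set S := {L : List (α × Bool) | IsReduced L ∧ k ≤ L.length ∧ L.length ≤ p}
  have hmaps : MapsTo (List.take k) S (coneSphere [] k) := fun L ⟨hL, hkL, _⟩ =>
    ⟨hL.infix (List.take_prefix k L).isInfix, by simpa using hkL, List.nil_prefix⟩
  have hfib : ∀ w ∈ coneSphere [] k, {L ∈ S | L.take k = w}.ncard =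
      ∑ i ∈ range (p + 1 - k), (2 * Fintype.card α - 1) ^ i := by
    rintro w ⟨hw, hlen, -⟩
    have : {L ∈ S | L.take k = w} = coneBall w p := by
      ext L
      simp only [S, coneBall, mem_ofPred_eq, List.prefix_iff_eq_take (l₁ := w), hlen]
      constructor
      · rintro ⟨⟨hL, -, hLp⟩, rfl⟩
        exact ⟨hL, hLp, rfl⟩
      · rintro ⟨hL, hLp, rfl⟩
        exact ⟨⟨hL, by simpa using hlen.ge, hLp⟩, rfl⟩
    rw [this, ncard_coneBall hw (List.ne_nil_of_length_pos (by omega)), hlen]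
  rw [ncard_eq_ncard_mul_of_fibers ((List.finite_length_le _ p).subset fun _ hL => hL.2.2)
    (coneSphere_finite [] k) hmaps hfib]
  obtain ⟨j, rfl⟩ := Nat.exists_eq_add_of_le' hk
  rw [ncard_coneSphere_nil, Nat.add_sub_cancel]

theorem ncard_ball_sub_ncard_ball [Finite α] {k : ℕ} (hk : 1 ≤ k) (p : ℕ) :
    {L : List (α × Bool) | IsReduced L ∧ L.length ≤ p}.ncard -
        {L : List (α × Bool) | IsReduced L ∧ L.length ≤ k - 1}.ncard =
      {L : List (α × Bool) | IsReduced L ∧ k ≤ L.length ∧ L.length ≤ p}.ncard := by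
  have hfin (b : ℕ) : {L : List (α × Bool) | IsReduced L ∧ L.length ≤ b}.Finite :=
    (List.finite_length_le _ b).subset fun _ hL => hL.2
  have hmono {b b' : ℕ} (h : b ≤ b') : {L : List (α × Bool) | IsReduced L ∧ L.length ≤ b} ⊆
      {L | IsReduced L ∧ L.length ≤ b'} := fun _ hL => ⟨hL.1, hL.2.trans h⟩
  obtain hkp | hpk := le_or_gt (k - 1) p
  · rw [← ncard_sdiff (hmono hkp) (hfin _)]
    congr 1
    ext L
    simp only [mem_sdiff, mem_ofPred_eq]
    grind
  · rw [Nat.sub_eq_zero_of_le (ncard_le_ncard (hmono hpk.le) (hfin _)),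
      eq_comm, ncard_eq_zero (hs := (hfin p).subset fun _ hL => ⟨hL.1, hL.2.2⟩)]
    exact eq_empty_of_forall_notMem fun L ⟨_, hkL, hLp⟩ => by omega

theorem ncard_caseTwoPairs [Fintype α] [DecidableEq α] {k : ℕ} (hk : 1 ≤ k)
    {a c : α × Bool} (hac : a.1 = c.1 → a.2 = c.2) (p : ℕ) :
    {z : List (α × Bool) × List (α × Bool) |
      IsReduced z.1 ∧ IsReduced z.2 ∧ IsCaseTwoPair p k a c z.1 z.2}.ncard =
      (2 * Fintype.card α - 1) ^ (k - 1) *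
        ((∑ i ∈ range (p - k), (2 * Fintype.card α - 1) ^ i) *
          ∑ i ∈ range (p + 1 - k), (2 * Fintype.card α - 1) ^ i) := by
  set S := {z : List (α × Bool) × List (α × Bool) |
    IsReduced z.1 ∧ IsReduced z.2 ∧ IsCaseTwoPair p k a c z.1 z.2}
  set W := {w : List (α × Bool) | IsReduced w ∧ w.length = k ∧ [a] <:+ w}
  have hS : S.Finite := ((List.finite_length_le _ p).prod (List.finite_length_le _ p)).subset
    fun _ hz => ⟨hz.2.2.1, hz.2.2.2.1⟩
  have hW : W.Finite := (List.finite_length_eq _ k).subset fun _ hw => hw.2.1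
  have hmaps : MapsTo (fun z => z.1.take k) S W := by
    rintro ⟨X, Y⟩ ⟨hX, -, hXY⟩
    obtain ⟨-, -, hlen, hsuf, -, -⟩ := (isCaseTwoPair_iff hk).mp hXY
    exact ⟨hX.infix (List.take_prefix k X).isInfix, hlen, hsuf⟩
  have hfib : ∀ w ∈ W, {z ∈ S | z.1.take k = w}.ncard =
      (∑ i ∈ range (p - k), (2 * Fintype.card α - 1) ^ i) *
        ∑ i ∈ range (p + 1 - k), (2 * Fintype.card α - 1) ^ i := by
    rintro w ⟨hw, hlen, hsuf⟩
    have hwc : IsReduced (w ++ [c]) := (isReduced_append_singleton_iff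
      (List.singleton_suffix_iff_getLast?_eq_some.mp hsuf)).mpr ⟨hw, hac⟩
    have : {z ∈ S | z.1.take k = w} = coneBall (w ++ [c]) p ×ˢ coneBall w p := by
      ext ⟨X, Y⟩
      simp only [S, coneBall, mem_ofPred_eq, mem_prod, isCaseTwoPair_iff hk]
      constructor
      · rintro ⟨⟨hX, hY, hXp, hYp, -, -, hXc, hXY⟩, rfl⟩
        exact ⟨⟨hX, hXp, hXc⟩, hY, hYp, hXY⟩
      · rintro ⟨⟨hX, hXp, hXc⟩, hY, hYp, hwY⟩
        have hXw : X.take k = w := by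
          rw [← hlen]
          exact (List.prefix_iff_eq_take.mp ((List.prefix_append w [c]).trans hXc)).symm
        subst hXw
        exact ⟨⟨hX, hY, hXp, hYp, hlen, hsuf, hXc, hwY⟩, rfl⟩
    rw [this, ncard_prod, ncard_coneBall hwc (by simp),
      ncard_coneBall hw (List.ne_nil_of_length_pos (by omega)), List.length_append, hlen,
      List.length_singleton, Nat.add_sub_add_right]
  have hWcard : W.ncard = (2 * Fintype.card α - 1) ^ (k - 1) := by
    obtain ⟨j, rfl⟩ := Nat.exists_eq_add_of_le' hk
    simpa [W, Nat.add_comm 1 j] using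
      ncard_setOf_suffix (IsReduced.singleton (a := a)) (by simp) j
  rw [ncard_eq_ncard_mul_of_fibers hS hW hmaps hfib, hWcard]

end FreeGroup

open FreeGroup

theorem scard_eq {n k : ℕ} (hk : 1 ≤ k) (p : ℕ) :
    Scard n k p = 2 * n * (2 * n - 1) ^ (k - 1) * ∑ i ∈ range (p + 1 - k), (2 * n - 1) ^ i := by
  rw [Scard, Gcard, Gcard, ncard_setOf_toWord (fun L => L.length ≤ p),
    ncard_setOf_toWord (fun L => L.length ≤ k - 1), ncard_ball_sub_ncard_ball hk,
    ncard_annulus hk, Fintype.card_fin]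

/-- Fix `n ≥ 2`, `k ≥ 1`, and `p ≥ 1`. The number of pairs `(x, y) ∈ G_p × G_p` such
that the reduced word of `x` has length at least `k+1` with `k`-th letter `a₂⁻¹` and
`(k+1)`-st letter `a₁`, and the reduced word of `y` has length at least `k` with first
`k` letters equal to the first `k` letters of the reduced word of `x`, is exactly
`𝒮(k+1,p)·𝒮(k,p)/(2n(2n−1)·𝒲(k))`, which equals `𝒮(k,p)·𝒮(k+1,p)/(2n·𝒲(k+1))`. -/
theorem count_case_two (n k p : ℕ) (hn : 2 ≤ n) (hk : 1 ≤ k)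
    (P : Set (FreeGroup (Fin n) × FreeGroup (Fin n)))
    (hP : P = {xy | xy.1.toWord.length ≤ p ∧ xy.2.toWord.length ≤ p ∧
      k + 1 ≤ xy.1.toWord.length ∧
      xy.1.toWord[k - 1]? = some (⟨1, by omega⟩, false) ∧
      xy.1.toWord[k]? = some (⟨0, by omega⟩, true) ∧
      k ≤ xy.2.toWord.length ∧
      xy.2.toWord.take k = xy.1.toWord.take k}) :
    (P.ncard : ℝ) =
      (Scard n (k + 1) p : ℝ) * (Scard n k p : ℝ) /
        (2 * n * (2 * (n : ℝ) - 1) * (Wcard n k : ℝ)) ∧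
    (Scard n (k + 1) p : ℝ) * (Scard n k p : ℝ) /
        (2 * n * (2 * (n : ℝ) - 1) * (Wcard n k : ℝ)) =
      (Scard n k p : ℝ) * (Scard n (k + 1) p : ℝ) / (2 * n * (Wcard n (k + 1) : ℝ)) := by
  have hP' : P.ncard = (2 * n - 1) ^ (k - 1) *
      ((∑ i ∈ range (p - k), (2 * n - 1) ^ i) * ∑ i ∈ range (p + 1 - k), (2 * n - 1) ^ i) := by
    rw [hP]
    exact (ncard_setOf_toWord_prod (IsCaseTwoPair p k ((⟨1, by omega⟩, false) : Fin n × Bool)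
      (⟨0, by omega⟩, true))).trans (by rw [ncard_caseTwoPairs hk (by simp) p, Fintype.card_fin])
  have hSk1 := scard_eq (n := n) (k := k + 1) (by omega) p
  rw [Nat.add_sub_cancel, Nat.add_sub_add_right] at hSk1
  have hSk := scard_eq (n := n) hk p
  have hq : ((2 * n - 1 : ℕ) : ℝ) = 2 * n - 1 := by
    rw [Nat.cast_sub (by omega)]
    push_cast
    ring
  have hpow : (2 * n - 1) ^ k = (2 * n - 1) ^ (k - 1) * (2 * n - 1) := by
    rw [← pow_succ, Nat.sub_add_cancel hk]
  have hq0 : (2 * n - 1 : ℝ) ≠ 0 := by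
    have : (2 : ℝ) ≤ n := by exact_mod_cast hn
    linarith
  rw [hP', hSk1, hSk, Wcard, Wcard, Nat.add_sub_cancel, hpow]
  push_cast
  rw [hq]
  constructor <;> field_simp
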